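/- arXiv:0909.2606 — 2 statements merged into one kernel-verified Lean document; each statement's English description precedes it below -/
import Mathlib

section
/- Let b : ℝ^d → ℝ^d be smooth and ℤ^d-periodic, write L φ = (1/2)Δφ + b·∇φ and L^ε φ(x) = (1/2)Δφ(x) + ε^{−1} b(x/ε)·∇φ(x). Suppose g, h : ℝ^d → ℝ are smooth ℤ^d-periodic functions with L g = b_1 and L h = F − K, where F(x) = 2 b_1(x) g(x) + 2 ∂_1 g(x) and K = ∫ F dμ, and suppose μ is a Borel probability measure on 𝕋^d with full support such that ∫ L φ dμ = 0 for every smooth ℤ^d-periodic φ. Then there exist constants C_1 > 0, C_2 ∈ ℝ and M > 0 such that for every ε ∈ (0,1], the function g^ε(x) = C_2 − C_1 x_1(1 + x_1) + ε C_1 (1 + 2x_1) g(x/ε) − ε² C_1 h(x/ε) satisfies: L^ε g^ε(x) = −1 for all x ∈ ℝ^d; g^ε(x) ≥ 0 whenever x_1 ∈ {−1, 0}; and |g^ε(x)| ≤ M whenever x_1 ∈ [−1, 0]. -/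
open MeasureTheory Set
open scoped BigOperators

noncomputable section

/-- The Laplacian `Δφ(x) = Σ_i ∂²_{ii} φ(x)` of `φ : ℝ^d → ℝ`. -/
def lap {d : ℕ} (φ : EuclideanSpace ℝ (Fin d) → ℝ) (x : EuclideanSpace ℝ (Fin d)) : ℝ :=
  ∑ i : Fin d,
    iteratedFDeriv ℝ 2 φ x ![EuclideanSpace.single i 1, EuclideanSpace.single i 1]

/-- The partial derivative `∂_i φ(x)` of `φ : ℝ^d → ℝ`. -/
def pder {d : ℕ} (φ : EuclideanSpace ℝ (Fin d) → ℝ) (i : Fin d)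
    (x : EuclideanSpace ℝ (Fin d)) : ℝ :=
  fderiv ℝ φ x (EuclideanSpace.single i 1)

/-- The generator `L φ = (1/2)Δφ + b·∇φ`. -/
def Lgen {d : ℕ} (b : EuclideanSpace ℝ (Fin d) → EuclideanSpace ℝ (Fin d))
    (φ : EuclideanSpace ℝ (Fin d) → ℝ) (x : EuclideanSpace ℝ (Fin d)) : ℝ :=
  (1 / 2) * lap φ x + ∑ i : Fin d, b x i * pder φ i x

/-- The torus `𝕋^d = ℝ^d/ℤ^d`. -/
abbrev Torus (d : ℕ) := Fin d → AddCircle (1 : ℝ)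

/-- The canonical projection `ℝ^d → 𝕋^d`. -/
def torusProj (d : ℕ) : EuclideanSpace ℝ (Fin d) → Torus d := fun x i => (x i : AddCircle (1 : ℝ))

/-- The rescaled generator `L^ε φ(x) = (1/2)Δφ(x) + ε⁻¹ b(x/ε)·∇φ(x)`. -/
def Leps {d : ℕ} (ε : ℝ) (b : EuclideanSpace ℝ (Fin d) → EuclideanSpace ℝ (Fin d))
    (φ : EuclideanSpace ℝ (Fin d) → ℝ) (x : EuclideanSpace ℝ (Fin d)) : ℝ :=
  (1 / 2) * lap φ x + ∑ i : Fin d, ε⁻¹ * b (ε⁻¹ • x) i * pder φ i x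

/-- The corrected test function
`g^ε(x) = C₂ − C₁ x₁(1 + x₁) + ε C₁ (1 + 2x₁) g(x/ε) − ε² C₁ h(x/ε)`. -/
def geps {d : ℕ} [NeZero d] (C₁ C₂ ε : ℝ)
    (g h : EuclideanSpace ℝ (Fin d) → ℝ) : EuclideanSpace ℝ (Fin d) → ℝ :=
  fun x => C₂ - C₁ * x 0 * (1 + x 0) + ε * C₁ * (1 + 2 * x 0) * g (ε⁻¹ • x)
    - ε ^ 2 * C₁ * h (ε⁻¹ • x)


-- ==================== auxiliary lemmas ====================
section Aux

variable {d : ℕ}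

local notation "E" => EuclideanSpace ℝ (Fin d)

lemma lap_eq {φ : E → ℝ} (hφ : ContDiff ℝ (⊤ : ℕ∞) φ) (x : E) :
    lap φ x = ∑ i : Fin d,
      fderiv ℝ (fun y => fderiv ℝ φ y (EuclideanSpace.single i 1)) x
        (EuclideanSpace.single i 1) := by
  unfold lap
  refine Finset.sum_congr rfl fun i _ => ?_
  rw [iteratedFDeriv_two_apply]
  have hd : DifferentiableAt ℝ (fderiv ℝ φ) x :=
    ((hφ.fderiv_right (m := (⊤ : ℕ∞)) (by simp)).differentiable (by simp)).differentiableAt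
  rw [fderiv_clm_apply hd (differentiableAt_const _)]
  simp

lemma contDiff_coord (i : Fin d) : ContDiff ℝ (⊤ : ℕ∞) (fun y : E => y i) :=
  (EuclideanSpace.proj i : E →L[ℝ] ℝ).contDiff

lemma contDiff_scale {φ : E → ℝ} (hφ : ContDiff ℝ (⊤ : ℕ∞) φ) (c : ℝ) :
    ContDiff ℝ (⊤ : ℕ∞) (fun y : E => φ (c • y)) :=
  hφ.comp ((c • ContinuousLinearMap.id ℝ E).contDiff)

lemma contDiff_geps [NeZero d] {g h : E → ℝ} (hg : ContDiff ℝ (⊤ : ℕ∞) g) (hh : ContDiff ℝ (⊤ : ℕ∞) h)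
    (C₁ C₂ ε : ℝ) : ContDiff ℝ (⊤ : ℕ∞) (geps C₁ C₂ ε g h) := by
  unfold geps
  exact (((contDiff_const.sub ((contDiff_const.mul (contDiff_coord 0)).mul
    (contDiff_const.add (contDiff_coord 0)))).add
    ((contDiff_const.mul (contDiff_const.add (contDiff_const.mul (contDiff_coord 0)))).mul
      (contDiff_scale hg ε⁻¹))).sub (contDiff_const.mul (contDiff_scale hh ε⁻¹)))

lemma hasFDerivAt_comp_smul {φ : E → ℝ} (hφ : Differentiable ℝ φ) (c : ℝ) (x : E) :
    HasFDerivAt (fun y : E => φ (c • y)) (c • fderiv ℝ φ (c • x)) x := by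
  have h1 : HasFDerivAt (fun y : E => c • y) (c • ContinuousLinearMap.id ℝ E) x := by
    exact (c • ContinuousLinearMap.id ℝ E).hasFDerivAt (x := x)
  have := ((hφ (c • x)).hasFDerivAt).comp x h1
  refine this.congr_fderiv ?_
  ext v; simp

lemma fderiv_geps_apply [NeZero d] {g h : E → ℝ} (hg : ContDiff ℝ (⊤ : ℕ∞) g) (hh : ContDiff ℝ (⊤ : ℕ∞) h)
    (C₁ C₂ ε : ℝ) (hε : ε ≠ 0) (y w : E) :
    fderiv ℝ (geps C₁ C₂ ε g h) y w =
      -(C₁ * (1 + 2 * y 0)) * w 0 + 2 * ε * C₁ * g (ε⁻¹ • y) * w 0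
        + C₁ * (1 + 2 * y 0) * (fderiv ℝ g (ε⁻¹ • y) w)
        - ε * C₁ * (fderiv ℝ h (ε⁻¹ • y) w) := by
  have p1 : HasFDerivAt (fun y : E => y 0) (EuclideanSpace.proj 0 : E →L[ℝ] ℝ) y :=
    (EuclideanSpace.proj (0 : Fin d) : E →L[ℝ] ℝ).hasFDerivAt
  have pg := hasFDerivAt_comp_smul (hg.differentiable (by simp)) ε⁻¹ y
  have ph := hasFDerivAt_comp_smul (hh.differentiable (by simp)) ε⁻¹ y
  have H := ((((p1.const_mul C₁).mul (p1.const_add 1)).const_sub C₂).add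
      ((((p1.const_mul 2).const_add 1).const_mul (ε * C₁)).mul pg)).sub
      (ph.const_mul (ε ^ 2 * C₁))
  have H' : HasFDerivAt (geps C₁ C₂ ε g h) _ y := H
  rw [H'.fderiv]
  simp only [ContinuousLinearMap.coe_sub', ContinuousLinearMap.coe_add', Pi.sub_apply,
    Pi.add_apply, ContinuousLinearMap.coe_smul', Pi.smul_apply, ContinuousLinearMap.add_apply,
    ContinuousLinearMap.smul_apply, ContinuousLinearMap.neg_apply, smul_eq_mul,
    PiLp.proj_apply]
  field_simp
  ring

lemma contDiff_fderiv_apply {φ : E → ℝ} (hφ : ContDiff ℝ (⊤ : ℕ∞) φ) (w : E) :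
    ContDiff ℝ (⊤ : ℕ∞) (fun y : E => fderiv ℝ φ y w) :=
  (hφ.fderiv_right (by simp)).clm_apply contDiff_const

lemma fderiv_fderiv_geps [NeZero d] {g h : E → ℝ} (hg : ContDiff ℝ (⊤ : ℕ∞) g) (hh : ContDiff ℝ (⊤ : ℕ∞) h)
    (C₁ C₂ ε : ℝ) (hε : ε ≠ 0) (x v w : E) :
    fderiv ℝ (fun y => fderiv ℝ (geps C₁ C₂ ε g h) y w) x v =
      -2 * C₁ * v 0 * w 0 + 2 * C₁ * (fderiv ℝ g (ε⁻¹ • x) v) * w 0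
        + 2 * C₁ * v 0 * (fderiv ℝ g (ε⁻¹ • x) w)
        + C₁ * (1 + 2 * x 0) * ε⁻¹ * (fderiv ℝ (fun y => fderiv ℝ g y w) (ε⁻¹ • x) v)
        - C₁ * (fderiv ℝ (fun y => fderiv ℝ h y w) (ε⁻¹ • x) v) := by
  have hrw : (fun y => fderiv ℝ (geps C₁ C₂ ε g h) y w) =
      (fun y : E => -(C₁ * (1 + 2 * y 0)) * w 0 + 2 * ε * C₁ * g (ε⁻¹ • y) * w 0
        + C₁ * (1 + 2 * y 0) * ((fun z => fderiv ℝ g z w) (ε⁻¹ • y))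
        - ε * C₁ * ((fun z => fderiv ℝ h z w) (ε⁻¹ • y))) :=
    funext fun y => fderiv_geps_apply hg hh C₁ C₂ ε hε y w
  rw [hrw]
  have p1 : HasFDerivAt (fun y : E => y 0) (EuclideanSpace.proj 0 : E →L[ℝ] ℝ) x :=
    (EuclideanSpace.proj (0 : Fin d) : E →L[ℝ] ℝ).hasFDerivAt
  have pg := hasFDerivAt_comp_smul (hg.differentiable (by simp)) ε⁻¹ x
  have pgw := hasFDerivAt_comp_smul ((contDiff_fderiv_apply hg w).differentiable (by simp)) ε⁻¹ x
  have phw := hasFDerivAt_comp_smul ((contDiff_fderiv_apply hh w).differentiable (by simp)) ε⁻¹ x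
  have H := (((((((p1.const_mul 2).const_add 1).const_mul C₁).neg.mul_const (w 0)).add
      ((pg.const_mul (2 * ε * C₁)).mul_const (w 0))).add
      ((((p1.const_mul 2).const_add 1).const_mul C₁).mul pgw)).sub (phw.const_mul (ε * C₁)))
  have H' : HasFDerivAt (fun y : E => -(C₁ * (1 + 2 * y 0)) * w 0 + 2 * ε * C₁ * g (ε⁻¹ • y) * w 0
        + C₁ * (1 + 2 * y 0) * ((fun z => fderiv ℝ g z w) (ε⁻¹ • y))
        - ε * C₁ * ((fun z => fderiv ℝ h z w) (ε⁻¹ • y))) _ x := H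
  rw [H'.fderiv]
  simp only [ContinuousLinearMap.coe_sub', ContinuousLinearMap.coe_add', Pi.sub_apply,
    Pi.add_apply, ContinuousLinearMap.coe_smul', Pi.smul_apply, ContinuousLinearMap.add_apply,
    ContinuousLinearMap.smul_apply, ContinuousLinearMap.neg_apply, smul_eq_mul,
    PiLp.proj_apply, Pi.neg_apply]
  field_simp
  ring

lemma pder_geps [NeZero d] {g h : E → ℝ} (hg : ContDiff ℝ (⊤ : ℕ∞) g) (hh : ContDiff ℝ (⊤ : ℕ∞) h)
    (C₁ C₂ ε : ℝ) (hε : ε ≠ 0) (x : E) (i : Fin d) :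
    pder (geps C₁ C₂ ε g h) i x =
      -(C₁ * (1 + 2 * x 0)) * (if (0 : Fin d) = i then 1 else 0)
        + 2 * ε * C₁ * g (ε⁻¹ • x) * (if (0 : Fin d) = i then 1 else 0)
        + C₁ * (1 + 2 * x 0) * pder g i (ε⁻¹ • x) - ε * C₁ * pder h i (ε⁻¹ • x) := by
  rw [pder, fderiv_geps_apply hg hh C₁ C₂ ε hε]
  simp [pder, EuclideanSpace.single_apply]

lemma lap_geps [NeZero d] {g h : E → ℝ} (hg : ContDiff ℝ (⊤ : ℕ∞) g) (hh : ContDiff ℝ (⊤ : ℕ∞) h)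
    (C₁ C₂ ε : ℝ) (hε : ε ≠ 0) (x : E) :
    lap (geps C₁ C₂ ε g h) x =
      -2 * C₁ + 4 * C₁ * pder g 0 (ε⁻¹ • x)
        + C₁ * (1 + 2 * x 0) * ε⁻¹ * lap g (ε⁻¹ • x) - C₁ * lap h (ε⁻¹ • x) := by
  rw [lap_eq (contDiff_geps hg hh C₁ C₂ ε)]
  have step : ∀ i : Fin d,
      fderiv ℝ (fun y => fderiv ℝ (geps C₁ C₂ ε g h) y (EuclideanSpace.single i 1)) x
        (EuclideanSpace.single i 1) =
      -2 * C₁ * (if (0 : Fin d) = i then 1 else 0) * (if (0 : Fin d) = i then 1 else 0)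
        + 2 * C₁ * pder g i (ε⁻¹ • x) * (if (0 : Fin d) = i then 1 else 0)
        + 2 * C₁ * (if (0 : Fin d) = i then 1 else 0) * pder g i (ε⁻¹ • x)
        + C₁ * (1 + 2 * x 0) * ε⁻¹ *
            (fderiv ℝ (fun y => fderiv ℝ g y (EuclideanSpace.single i 1)) (ε⁻¹ • x)
              (EuclideanSpace.single i 1))
        - C₁ * (fderiv ℝ (fun y => fderiv ℝ h y (EuclideanSpace.single i 1)) (ε⁻¹ • x)
              (EuclideanSpace.single i 1)) := by
    intro i
    rw [fderiv_fderiv_geps hg hh C₁ C₂ ε hε]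
    simp [pder, EuclideanSpace.single_apply]
  rw [Finset.sum_congr rfl fun i _ => step i]
  rw [Finset.sum_sub_distrib, Finset.sum_add_distrib, Finset.sum_add_distrib,
    Finset.sum_add_distrib, ← Finset.mul_sum, ← Finset.mul_sum, ← lap_eq hg, ← lap_eq hh]
  simp only [mul_ite, ite_mul, mul_zero, zero_mul, mul_one, one_mul,
    Finset.sum_ite_eq, Finset.mem_univ, if_true]
  ring

lemma Leps_geps [NeZero d] {b : E → E} {g h : E → ℝ} {K : ℝ}
    (hg : ContDiff ℝ (⊤ : ℕ∞) g) (hh : ContDiff ℝ (⊤ : ℕ∞) h)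
    (hLg : ∀ x, Lgen b g x = b x 0)
    (hLh : ∀ x, Lgen b h x = (2 * b x 0 * g x + 2 * pder g 0 x) - K)
    (C₁ C₂ ε : ℝ) (hε : ε ≠ 0) (x : E) :
    Leps ε b (geps C₁ C₂ ε g h) x = -(C₁ * (1 - K)) := by
  have step : ∀ i : Fin d, ε⁻¹ * b (ε⁻¹ • x) i * pder (geps C₁ C₂ ε g h) i x =
      (if (0 : Fin d) = i then
        ε⁻¹ * (-(C₁ * (1 + 2 * x 0))) * b (ε⁻¹ • x) i + 2 * C₁ * g (ε⁻¹ • x) * b (ε⁻¹ • x) i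
       else 0)
      + (C₁ * (1 + 2 * x 0) * ε⁻¹) * (b (ε⁻¹ • x) i * pder g i (ε⁻¹ • x))
      - C₁ * (b (ε⁻¹ • x) i * pder h i (ε⁻¹ • x)) := by
    intro i
    rw [pder_geps hg hh C₁ C₂ ε hε]
    rcases eq_or_ne (0 : Fin d) i with h0 | h0
    · simp only [if_pos h0]
      field_simp
    · simp only [if_neg h0]
      field_simp
      ring
  rw [Leps, lap_geps hg hh C₁ C₂ ε hε, Finset.sum_congr rfl fun i _ => step i,
    Finset.sum_sub_distrib, Finset.sum_add_distrib, Finset.sum_ite_eq,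
    ← Finset.mul_sum, ← Finset.mul_sum]
  simp only [Finset.mem_univ, if_true]
  have hg' := hLg (ε⁻¹ • x)
  have hh' := hLh (ε⁻¹ • x)
  rw [Lgen] at hg' hh'
  linear_combination (C₁ * (1 + 2 * x 0) * ε⁻¹) * hg' - C₁ * hh'


lemma single_add' (i : Fin d) (a c : ℝ) :
    EuclideanSpace.single i (a + c) = EuclideanSpace.single i a + EuclideanSpace.single i c := by
  ext j
  simp only [EuclideanSpace.single_apply, PiLp.add_apply]
  split <;> simp

lemma single_zero' (i : Fin d) : EuclideanSpace.single i (0 : ℝ) = 0 := by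
  ext j
  simp [EuclideanSpace.single_apply]

lemma fderiv_shift {φ : E → ℝ} (hφ : Differentiable ℝ φ) {c : E}
    (hper : ∀ y, φ (y + c) = φ y) (x : E) : fderiv ℝ φ (x + c) = fderiv ℝ φ x := by
  have h1 : HasFDerivAt (fun y : E => φ (y + c)) ((fderiv ℝ φ (x + c)).comp
      (ContinuousLinearMap.id ℝ E)) x :=
    (hφ (x + c)).hasFDerivAt.comp x ((hasFDerivAt_id x).add_const c)
  have h2 : (fun y : E => φ (y + c)) = φ := funext hper
  rw [h2] at h1
  rw [h1.fderiv]
  ext v; simp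

lemma per_single {φ : E → ℝ}
    (hper : ∀ (x : E) (i : Fin d), φ (x + EuclideanSpace.single i 1) = φ x)
    (n : ℤ) (i : Fin d) : ∀ x : E, φ (x + EuclideanSpace.single i (n : ℝ)) = φ x := by
  induction n using Int.induction_on with
  | zero => intro x; rw [show ((0 : ℤ) : ℝ) = 0 by norm_num, single_zero', add_zero]
  | succ k ih =>
      intro x
      have ih' := ih
      push_cast at ih' ⊢
      rw [single_add', ← add_assoc, hper, ih']
  | pred k ih =>
      intro x
      have ih' := ih
      push_cast at ih' ⊢
      have h1 : ∀ y : E, φ (y + EuclideanSpace.single i (-1 : ℝ)) = φ y := by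
        intro y
        have h2 := hper (y + EuclideanSpace.single i (-1 : ℝ)) i
        rw [add_assoc, ← single_add'] at h2
        norm_num [single_zero'] at h2
        exact h2.symm
      rw [show (-(k : ℝ) - 1) = (-1) + (-(k : ℝ)) by ring, single_add', ← add_assoc, ih', h1]

lemma per_intvec {φ : E → ℝ}
    (hper : ∀ (x : E) (i : Fin d), φ (x + EuclideanSpace.single i 1) = φ x)
    (m : Fin d → ℤ) (x : E) :
    φ (x + ∑ i : Fin d, EuclideanSpace.single i ((m i : ℝ))) = φ x := by
  classical
  suffices H : ∀ s : Finset (Fin d), ∀ x : E,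
      φ (x + ∑ i ∈ s, EuclideanSpace.single i ((m i : ℝ))) = φ x from H Finset.univ x
  intro s
  induction s using Finset.induction_on with
  | empty => simp
  | insert j s hj ih =>
      intro x
      rw [Finset.sum_insert hj, ← add_assoc, ih, per_single hper]

def fract (x : EuclideanSpace ℝ (Fin d)) : EuclideanSpace ℝ (Fin d) :=
  WithLp.toLp 2 (fun i => Int.fract (x i))

lemma fract_eq (x : E) :
    fract x = x + ∑ i : Fin d, EuclideanSpace.single i (((-⌊x i⌋ : ℤ) : ℝ)) := by
  ext j
  have hsum : (∑ i : Fin d, EuclideanSpace.single i (((-⌊x i⌋ : ℤ) : ℝ))) j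
      = ∑ i : Fin d, (EuclideanSpace.single i (((-⌊x i⌋ : ℤ) : ℝ)) : E) j := by
    exact map_sum (EuclideanSpace.proj j : E →L[ℝ] ℝ)
        (fun i => (EuclideanSpace.single i (((-⌊x i⌋ : ℤ) : ℝ)) : E)) Finset.univ
  rw [PiLp.add_apply, hsum]
  show Int.fract (x j) = _
  simp only [EuclideanSpace.single_apply, Finset.sum_ite_eq, Finset.mem_univ, if_true]
  rw [Int.fract]
  push_cast
  ring

lemma per_fract {φ : E → ℝ}
    (hper : ∀ (x : E) (i : Fin d), φ (x + EuclideanSpace.single i 1) = φ x) (x : E) :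
    φ (fract x) = φ x := by
  rw [fract_eq]; exact per_intvec hper _ x

lemma fract_mem_cube (x : E) (i : Fin d) : fract x i ∈ Icc (0 : ℝ) 1 :=
  ⟨Int.fract_nonneg _, le_of_lt (Int.fract_lt_one _)⟩

lemma exists_bound {φ : E → ℝ} (hc : Continuous φ)
    (hper : ∀ (x : E) (i : Fin d), φ (x + EuclideanSpace.single i 1) = φ x) :
    ∃ B : ℝ, 0 ≤ B ∧ ∀ x : E, |φ x| ≤ B := by
  classical
  set Q : Set (EuclideanSpace ℝ (Fin d)) :=
    (PiLp.continuousLinearEquiv 2 ℝ (fun _ : Fin d => ℝ)).symm ''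
      (Set.univ.pi fun _ : Fin d => Icc (0 : ℝ) 1) with hQ
  have hQc : IsCompact Q :=
    (isCompact_univ_pi fun _ => isCompact_Icc).image
      (PiLp.continuousLinearEquiv 2 ℝ (fun _ : Fin d => ℝ)).symm.continuous
  obtain ⟨C, hC⟩ := hQc.exists_bound_of_continuousOn hc.continuousOn
  refine ⟨max C 0, le_max_right _ _, fun x => ?_⟩
  have hmem : fract x ∈ Q := by
    refine ⟨fun i => Int.fract (x i), fun i _ => fract_mem_cube x i, rfl⟩
  have := hC _ hmem
  rw [Real.norm_eq_abs] at this
  calc |φ x| = |φ (fract x)| := by rw [per_fract hper]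
    _ ≤ C := this
    _ ≤ max C 0 := le_max_left _ _

lemma fderiv_sq_apply {g : E → ℝ} (hg : ContDiff ℝ (⊤ : ℕ∞) g) (x w : E) :
    fderiv ℝ (fun y => g y * g y) x w = 2 * g x * fderiv ℝ g x w := by
  have H := ((hg.differentiable (by simp) x).hasFDerivAt).mul
    ((hg.differentiable (by simp) x).hasFDerivAt)
  have H' : HasFDerivAt (fun y => g y * g y) _ x := H
  rw [H'.fderiv]
  simp only [ContinuousLinearMap.add_apply, ContinuousLinearMap.smul_apply, smul_eq_mul]
  ring

lemma pder_sq {g : E → ℝ} (hg : ContDiff ℝ (⊤ : ℕ∞) g) (x : E) (i : Fin d) :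
    pder (fun y => g y * g y) i x = 2 * g x * pder g i x := by
  rw [pder, fderiv_sq_apply hg, pder]

lemma fderiv_fderiv_sq {g : E → ℝ} (hg : ContDiff ℝ (⊤ : ℕ∞) g) (x v w : E) :
    fderiv ℝ (fun y => fderiv ℝ (fun z => g z * g z) y w) x v =
      2 * (fderiv ℝ g x v) * (fderiv ℝ g x w)
        + 2 * g x * (fderiv ℝ (fun y => fderiv ℝ g y w) x v) := by
  have hrw : (fun y => fderiv ℝ (fun z => g z * g z) y w) =
      (fun y => 2 * g y * ((fun z => fderiv ℝ g z w) y)) :=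
    funext fun y => fderiv_sq_apply hg y w
  rw [hrw]
  have H := (((hg.differentiable (by simp) x).hasFDerivAt).const_mul 2).mul
    (((contDiff_fderiv_apply hg w).differentiable (by simp) x).hasFDerivAt)
  have H' : HasFDerivAt (fun y => 2 * g y * ((fun z => fderiv ℝ g z w) y)) _ x := H
  rw [H'.fderiv]
  simp only [ContinuousLinearMap.add_apply, ContinuousLinearMap.smul_apply, smul_eq_mul]
  ring

lemma lap_sq {g : E → ℝ} (hg : ContDiff ℝ (⊤ : ℕ∞) g) (x : E) :
    lap (fun y => g y * g y) x = 2 * g x * lap g x + 2 * ∑ i : Fin d, (pder g i x) ^ 2 := by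
  rw [lap_eq (hg.mul hg)]
  have step : ∀ i : Fin d,
      fderiv ℝ (fun y => fderiv ℝ (fun z => g z * g z) y (EuclideanSpace.single i 1)) x
        (EuclideanSpace.single i 1) =
      2 * (pder g i x) ^ 2 + 2 * g x *
        (fderiv ℝ (fun y => fderiv ℝ g y (EuclideanSpace.single i 1)) x
          (EuclideanSpace.single i 1)) := by
    intro i
    rw [fderiv_fderiv_sq hg]
    rw [pder]
    ring
  rw [Finset.sum_congr rfl fun i _ => step i, Finset.sum_add_distrib, ← Finset.mul_sum,
    ← Finset.mul_sum, ← lap_eq hg, add_comm]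

lemma Lgen_sq {b : E → E} {g : E → ℝ} (hg : ContDiff ℝ (⊤ : ℕ∞) g) (x : E) :
    Lgen b (fun y => g y * g y) x
      = 2 * g x * Lgen b g x + ∑ i : Fin d, (pder g i x) ^ 2 := by
  have hsum : ∀ i : Fin d, b x i * pder (fun y => g y * g y) i x
      = 2 * g x * (b x i * pder g i x) := fun i => by rw [pder_sq hg]; ring
  rw [Lgen, Lgen, lap_sq hg, Finset.sum_congr rfl fun i _ => hsum i, ← Finset.mul_sum]
  ring

lemma pder_per {φ : E → ℝ} (hφ : ContDiff ℝ (⊤ : ℕ∞) φ)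
    (hper : ∀ (x : E) (i : Fin d), φ (x + EuclideanSpace.single i 1) = φ x) (j : Fin d) :
    ∀ (x : E) (i : Fin d), pder φ j (x + EuclideanSpace.single i 1) = pder φ j x := by
  intro x i
  rw [pder, fderiv_shift (hφ.differentiable (by simp)) (fun y => hper y i), pder]

def repE (y : Torus d) : EuclideanSpace ℝ (Fin d) :=
  WithLp.toLp 2 (fun i => (AddCircle.equivIco 1 0 (y i) : ℝ))

lemma repE_proj (x : E) : repE (torusProj d x) = fract x := by
  ext i
  show ((AddCircle.equivIco 1 0 ((x i : AddCircle (1:ℝ))) : ℝ)) = Int.fract (x i)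
  rw [AddCircle.coe_equivIco_mk_apply]
  simp

lemma repE_mem_cube (y : Torus d) (i : Fin d) : repE y i ∈ Icc (0:ℝ) 1 := by
  show ((AddCircle.equivIco 1 0 (y i) : ℝ)) ∈ Icc (0:ℝ) 1
  have h := (AddCircle.equivIco 1 0 (y i)).2
  exact ⟨h.1, by linarith [h.2]⟩

lemma measurable_comp_repE {Φ : EuclideanSpace ℝ (Fin d) → ℝ} (hΦ : Continuous Φ) :
    Measurable (fun y : Torus d => Φ (repE y)) := by
  have h1 : Measurable (fun y : Torus d => (repE y).ofLp) := by
    apply measurable_pi_lambda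
    intro i
    exact measurable_subtype_coe.comp
      ((AddCircle.measurableEquivIco 1 0).measurable.comp (measurable_pi_apply i))
  have h2 : Measurable (fun y : Torus d => repE y) :=
    (WithLp.measurable_toLp 2 _).comp h1
  exact hΦ.measurable.comp h2

lemma cube_bound {Φ : EuclideanSpace ℝ (Fin d) → ℝ} (hΦ : Continuous Φ) :
    ∃ C : ℝ, ∀ z : EuclideanSpace ℝ (Fin d), (∀ i, z i ∈ Icc (0:ℝ) 1) → |Φ z| ≤ C := by
  classical
  set Q : Set (EuclideanSpace ℝ (Fin d)) :=
    (PiLp.continuousLinearEquiv 2 ℝ (fun _ : Fin d => ℝ)).symm ''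
      (Set.univ.pi fun _ : Fin d => Icc (0 : ℝ) 1) with hQ
  have hQc : IsCompact Q :=
    (isCompact_univ_pi fun _ => isCompact_Icc).image
      (PiLp.continuousLinearEquiv 2 ℝ (fun _ : Fin d => ℝ)).symm.continuous
  obtain ⟨C, hC⟩ := hQc.exists_bound_of_continuousOn hΦ.continuousOn
  refine ⟨C, fun z hz => ?_⟩
  have : z ∈ Q := ⟨fun i => z i, fun i _ => hz i, rfl⟩
  simpa [Real.norm_eq_abs] using hC z this

lemma integrable_comp_repE {Φ : EuclideanSpace ℝ (Fin d) → ℝ} (hΦ : Continuous Φ)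
    (μ : Measure (Torus d)) [IsProbabilityMeasure μ] :
    Integrable (fun y : Torus d => Φ (repE y)) μ := by
  obtain ⟨C, hC⟩ := cube_bound hΦ
  exact (integrable_const C).mono' (measurable_comp_repE hΦ).aestronglyMeasurable
    (Filter.Eventually.of_forall fun y => by
      simpa [Real.norm_eq_abs] using hC (repE y) (repE_mem_cube y))

lemma isOpenMap_torusProj : IsOpenMap (torusProj d) := by
  have h1 : IsOpenMap (Pi.map fun (_ : Fin d) (t : ℝ) => (t : AddCircle (1:ℝ))) :=
    IsOpenMap.piMap (fun _ => QuotientAddGroup.isOpenMap_coe)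
      (Filter.Eventually.of_forall fun _ => QuotientAddGroup.mk_surjective)
  have h2 : IsOpenMap (⇑(PiLp.continuousLinearEquiv 2 ℝ (fun _ : Fin d => ℝ))) :=
    (PiLp.continuousLinearEquiv 2 ℝ (fun _ : Fin d => ℝ)).toHomeomorph.isOpenMap
  have : torusProj d = (Pi.map fun (_ : Fin d) (t : ℝ) => (t : AddCircle (1:ℝ))) ∘
      (⇑(PiLp.continuousLinearEquiv 2 ℝ (fun _ : Fin d => ℝ))) := rfl
  rw [this]
  exact h1.comp h2

lemma K_lt_one [NeZero d] {b : E → E} {g : E → ℝ} {K : ℝ}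
    (hb : ContDiff ℝ (⊤ : ℕ∞) b)
    (hbper : ∀ (x : E) (i : Fin d), b (x + EuclideanSpace.single i 1) = b x)
    (hg : ContDiff ℝ (⊤ : ℕ∞) g)
    (hgper : ∀ (x : E) (i : Fin d), g (x + EuclideanSpace.single i 1) = g x)
    (μ : Measure (Torus d)) [IsProbabilityMeasure μ]
    (hsupp : ∀ U : Set (Torus d), IsOpen U → U.Nonempty → 0 < μ U)
    (hinv : ∀ φ : E → ℝ, ContDiff ℝ (⊤ : ℕ∞) φ →
      (∀ (x : E) (i : Fin d), φ (x + EuclideanSpace.single i 1) = φ x) →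
      ∀ φbar : Torus d → ℝ, (∀ x, φbar (torusProj d x) = Lgen b φ x) →
      ∫ y, φbar y ∂μ = 0)
    (hLg : ∀ x, Lgen b g x = b x 0)
    (hK : ∀ Fbar : Torus d → ℝ,
      (∀ x, Fbar (torusProj d x) = 2 * b x 0 * g x + 2 * pder g 0 x) →
      K = ∫ y, Fbar y ∂μ) :
    K < 1 := by
  classical
  have hbc : Continuous fun z : E => b z 0 :=
    (EuclideanSpace.proj (0 : Fin d) : E →L[ℝ] ℝ).continuous.comp hb.continuous
  have hgc := hg.continuous
  have hpc : ∀ i : Fin d, Continuous fun z : E => pder g i z := fun i =>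
    (contDiff_fderiv_apply hg (EuclideanSpace.single i 1)).continuous
  have hb0per : ∀ (x : E) (i : Fin d), b (x + EuclideanSpace.single i 1) 0
      = b x 0 := fun x i => by rw [hbper]
  have hpper : ∀ j : Fin d, ∀ (x : E) (i : Fin d),
      pder g j (x + EuclideanSpace.single i 1) = pder g j x := fun j => pder_per hg hgper j
  set H : E → ℝ :=
    fun z => ∑ i : Fin d, (pder g i z - if (0 : Fin d) = i then 1 else 0) ^ 2 with hH
  set Φ : E → ℝ := fun z => 2 * g z * b z 0 + ∑ i : Fin d, (pder g i z) ^ 2 with hΦ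
  have hHc : Continuous H :=
    continuous_finset_sum _ fun i _ => ((hpc i).sub continuous_const).pow 2
  have hΦc : Continuous Φ :=
    ((continuous_const.mul hgc).mul hbc).add (continuous_finset_sum _ fun i _ => (hpc i).pow 2)
  have hHper : ∀ (x : E) (i : Fin d), H (x + EuclideanSpace.single i 1) = H x := by
    intro x i
    exact Finset.sum_congr rfl fun j _ => by rw [hpper j x i]
  have hΦper : ∀ (x : E) (i : Fin d), Φ (x + EuclideanSpace.single i 1) = Φ x := by
    intro x i
    simp only [hΦ]
    rw [hgper, hbper]
    exact congrArg _ (Finset.sum_congr rfl fun j _ => by rw [hpper j x i])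
  have hLsq : ∀ x : E, Lgen b (fun y => g y * g y) x = Φ x := fun x => by
    rw [Lgen_sq hg, hLg]
  have hint0 : ∫ y, Φ (repE y) ∂μ = 0 := by
    refine hinv (fun y => g y * g y) (hg.mul hg)
      (fun x i => by show g _ * g _ = g x * g x; rw [hgper])
      (fun y => Φ (repE y)) (fun x => ?_)
    show Φ (repE (torusProj d x)) = _
    rw [repE_proj, hLsq, per_fract hΦper]
  have hKint : K = ∫ y, (2 * b (repE y) 0 * g (repE y) + 2 * pder g 0 (repE y)) ∂μ := by
    refine hK _ (fun x => ?_)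
    have hb0 : b (fract x) 0 = b x 0 := by simpa using per_fract (φ := fun z : E => b z 0) hb0per x
    show 2 * b (repE (torusProj d x)) 0 * g (repE (torusProj d x))
        + 2 * pder g 0 (repE (torusProj d x)) = _
    rw [repE_proj, hb0, per_fract hgper, per_fract (hpper 0)]
  have keyalg : ∀ z : E, 2 * b z 0 * g z + 2 * pder g 0 z = Φ z + (1 - H z) := by
    intro z
    have e1 : H z = (∑ i : Fin d, (pder g i z) ^ 2) - (2 * pder g 0 z - 1) := by
      simp only [hH]
      have e2 : ∀ i : Fin d, (pder g i z - if (0 : Fin d) = i then 1 else 0) ^ 2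
          = (pder g i z) ^ 2 - (if (0 : Fin d) = i then 2 * pder g i z - 1 else 0) := by
        intro i; split <;> ring
      rw [Finset.sum_congr rfl fun i _ => e2 i, Finset.sum_sub_distrib, Finset.sum_ite_eq]
      simp
    simp only [hΦ]
    linear_combination e1
  have intΦ : Integrable (fun y => Φ (repE y)) μ := integrable_comp_repE hΦc μ
  have intH : Integrable (fun y => H (repE y)) μ := integrable_comp_repE hHc μ
  have intC : Integrable (fun _ : Torus d => (1 : ℝ)) μ := integrable_const 1
  have h1K : K = 1 - ∫ y, H (repE y) ∂μ := by
    rw [hKint]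
    have hfe : (fun y : Torus d => 2 * b (repE y) 0 * g (repE y) + 2 * pder g 0 (repE y))
        = fun y => Φ (repE y) + (1 - H (repE y)) := funext fun y => keyalg (repE y)
    have intSub : Integrable (fun y : Torus d => 1 - H (repE y)) μ := intC.sub intH
    rw [hfe, integral_add intΦ intSub, hint0, integral_sub intC intH, integral_const]
    simp
  have hHnonneg : ∀ y : Torus d, 0 ≤ H (repE y) := fun y =>
    Finset.sum_nonneg fun i _ => sq_nonneg _
  suffices hpos : 0 < ∫ y, H (repE y) ∂μ by rw [h1K]; linarith
  by_contra hle
  push_neg at hle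
  have hzero : ∫ y, H (repE y) ∂μ = 0 :=
    le_antisymm hle (integral_nonneg fun y => hHnonneg y)
  have hae : ∀ᵐ y ∂μ, H (repE y) = 0 := by
    have := (integral_eq_zero_iff_of_nonneg (fun y => hHnonneg y) intH).mp hzero
    filter_upwards [this] with y hy using hy
  have hx0 : ∃ x0 : E, 0 < H x0 := by
    by_contra hno
    push_neg at hno
    have hzeroH : ∀ x : E, H x = 0 := fun x =>
      le_antisymm (hno x) (Finset.sum_nonneg fun i _ => sq_nonneg _)
    have hp1 : ∀ x : E, pder g 0 x = 1 := by
      intro x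
      have h := (Finset.sum_eq_zero_iff_of_nonneg (fun i _ => sq_nonneg _)).mp
        (hzeroH x) 0 (Finset.mem_univ 0)
      rw [if_pos rfl] at h
      have h2 : pder g 0 x - 1 = 0 := by
        exact (pow_eq_zero_iff two_ne_zero).mp h
      linarith
    set v : E := EuclideanSpace.single (0 : Fin d) (1 : ℝ) with hv
    have hc : ∀ t : ℝ, HasDerivAt (fun t : ℝ => g (t • v) - t) 0 t := by
      intro t
      have hcurve : HasDerivAt (fun t : ℝ => t • v) v t := by
        simpa using (hasDerivAt_id t).smul_const v
      have hcomp := (hg.differentiable (by simp) (t • v)).hasFDerivAt.comp_hasDerivAt t hcurve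
      have hone : fderiv ℝ g (t • v) v = 1 := hp1 (t • v)
      have := hcomp.sub (hasDerivAt_id t)
      rw [hone] at this
      rw [sub_self] at this
      exact this
    have hconst := is_const_of_deriv_eq_zero
      (fun t => (hc t).differentiableAt) (fun t => (hc t).deriv) 0 1
    have hval : g ((1 : ℝ) • v) = g ((0 : ℝ) • v) := by
      have hrw : (1 : ℝ) • v = (0 : ℝ) • v + EuclideanSpace.single (0 : Fin d) 1 := by
        simp [hv]
      rw [hrw, hgper]
    simp only [hval] at hconst
    linarith
  obtain ⟨x0, hx0p⟩ := hx0
  have hU : IsOpen {x : E | 0 < H x} := isOpen_lt continuous_const hHc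
  have hV : IsOpen (torusProj d '' {x : E | 0 < H x}) := isOpenMap_torusProj _ hU
  have hVne : (torusProj d '' {x : E | 0 < H x}).Nonempty := ⟨_, x0, hx0p, rfl⟩
  have hμV := hsupp _ hV hVne
  have hsub : torusProj d '' {x : E | 0 < H x} ⊆ {y : Torus d | H (repE y) ≠ 0} := by
    rintro y ⟨x, hx, rfl⟩
    have hrp : H (repE (torusProj d x)) = H x := by rw [repE_proj]; exact per_fract hHper x
    simp only [mem_setOf_eq, hrp]
    exact ne_of_gt hx
  have hnull : μ {y : Torus d | H (repE y) ≠ 0} = 0 := by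
    have h := hae
    rw [MeasureTheory.ae_iff] at h
    simpa using h
  have : μ (torusProj d '' {x : E | 0 < H x}) = 0 :=
    le_antisymm (hnull ▸ measure_mono hsub) (zero_le)
  rw [this] at hμV
  exact lt_irrefl _ hμV


end Aux


/-- Under the assumptions of the multiscale expansion (with `K = ∫ F dμ` and
`μ` a fully supported infinitesimally invariant probability measure on the torus), one can
choose `C₁ > 0`, `C₂` and `M > 0` such that for every `ε ∈ (0,1]` the function `g^ε` is a
uniformly bounded supersolution: `L^ε g^ε ≡ −1`, `g^ε ≥ 0` on `{x₁ ∈ {−1,0}}`, and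
`|g^ε| ≤ M` on the slab `{x₁ ∈ [−1,0]}`. -/
theorem bounded_supersolution_exists {d : ℕ} [NeZero d]
    (b : EuclideanSpace ℝ (Fin d) → EuclideanSpace ℝ (Fin d))
    (g h : EuclideanSpace ℝ (Fin d) → ℝ) (K : ℝ)
    (hb : ContDiff ℝ (⊤ : ℕ∞) b)
    (hbper : ∀ (x : EuclideanSpace ℝ (Fin d)) (i : Fin d),
      b (x + EuclideanSpace.single i 1) = b x)
    (hg : ContDiff ℝ (⊤ : ℕ∞) g)
    (hgper : ∀ (x : EuclideanSpace ℝ (Fin d)) (i : Fin d),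
      g (x + EuclideanSpace.single i 1) = g x)
    (hh : ContDiff ℝ (⊤ : ℕ∞) h)
    (hhper : ∀ (x : EuclideanSpace ℝ (Fin d)) (i : Fin d),
      h (x + EuclideanSpace.single i 1) = h x)
    (μ : Measure (Torus d)) [IsProbabilityMeasure μ]
    (hsupp : ∀ U : Set (Torus d), IsOpen U → U.Nonempty → 0 < μ U)
    (hinv : ∀ φ : EuclideanSpace ℝ (Fin d) → ℝ, ContDiff ℝ (⊤ : ℕ∞) φ →
      (∀ (x : EuclideanSpace ℝ (Fin d)) (i : Fin d), φ (x + EuclideanSpace.single i 1) = φ x) →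
      ∀ φbar : Torus d → ℝ, (∀ x, φbar (torusProj d x) = Lgen b φ x) →
      ∫ y, φbar y ∂μ = 0)
    (hLg : ∀ x, Lgen b g x = b x 0)
    (hK : ∀ Fbar : Torus d → ℝ,
      (∀ x, Fbar (torusProj d x) = 2 * b x 0 * g x + 2 * pder g 0 x) →
      K = ∫ y, Fbar y ∂μ)
    (hLh : ∀ x, Lgen b h x = (2 * b x 0 * g x + 2 * pder g 0 x) - K) :
    ∃ C₁ C₂ M : ℝ, 0 < C₁ ∧ 0 < M ∧ ∀ ε ∈ Set.Ioc (0 : ℝ) 1,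
      (∀ x, Leps ε b (geps C₁ C₂ ε g h) x = -1) ∧
      (∀ x : EuclideanSpace ℝ (Fin d), x 0 = -1 ∨ x 0 = 0 → 0 ≤ geps C₁ C₂ ε g h x) ∧
      (∀ x : EuclideanSpace ℝ (Fin d), x 0 ∈ Set.Icc (-1 : ℝ) 0 →
        |geps C₁ C₂ ε g h x| ≤ M) := by
  have hK1 : K < 1 := K_lt_one hb hbper hg hgper μ hsupp hinv hLg hK
  obtain ⟨Bg, hBg0, hBg⟩ := exists_bound hg.continuous hgper
  obtain ⟨Bh, hBh0, hBh⟩ := exists_bound hh.continuous hhper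
  have hKne : (1 : ℝ) - K ≠ 0 := by linarith
  set C₁ : ℝ := (1 - K)⁻¹ with hC₁def
  have hC₁ : 0 < C₁ := inv_pos.mpr (by linarith)
  set C₂ : ℝ := C₁ * (Bg + Bh) with hC₂def
  set M : ℝ := C₁ * (1 + 2 * Bg + 2 * Bh) with hMdef
  have hM : 0 < M := mul_pos hC₁ (by linarith)
  refine ⟨C₁, C₂, M, hC₁, hM, fun ε hε => ?_⟩
  have hε0 : 0 < ε := hε.1
  have hε1 : ε ≤ 1 := hε.2
  have hεne : ε ≠ 0 := ne_of_gt hε0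
  have habsg : ∀ (t : ℝ), -1 ≤ t → t ≤ 0 →
      ∀ z : EuclideanSpace ℝ (Fin d), |ε * C₁ * (1 + 2 * t) * g z| ≤ C₁ * Bg := by
    intro t ht1 ht2 z
    rw [abs_mul]
    have e1 : |ε * C₁ * (1 + 2 * t)| ≤ C₁ := by
      rw [abs_mul, abs_of_pos (mul_pos hε0 hC₁)]
      have e2 : |1 + 2 * t| ≤ 1 := abs_le.mpr ⟨by linarith, by linarith⟩
      calc ε * C₁ * |1 + 2 * t| ≤ ε * C₁ * 1 :=
            mul_le_mul_of_nonneg_left e2 (mul_nonneg hε0.le hC₁.le)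
        _ = ε * C₁ := mul_one _
        _ ≤ 1 * C₁ := mul_le_mul_of_nonneg_right hε1 hC₁.le
        _ = C₁ := one_mul _
    exact mul_le_mul e1 (hBg z) (abs_nonneg _) hC₁.le
  have habsh : ∀ z : EuclideanSpace ℝ (Fin d), |ε ^ 2 * C₁ * h z| ≤ C₁ * Bh := by
    intro z
    rw [abs_mul]
    have e1 : |ε ^ 2 * C₁| ≤ C₁ := by
      rw [abs_of_pos (mul_pos (pow_pos hε0 2) hC₁)]
      have e2 : ε ^ 2 ≤ 1 := by nlinarith
      calc ε ^ 2 * C₁ ≤ 1 * C₁ := mul_le_mul_of_nonneg_right e2 hC₁.le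
        _ = C₁ := one_mul _
    exact mul_le_mul e1 (hBh z) (abs_nonneg _) hC₁.le
  have hgeval : ∀ x : EuclideanSpace ℝ (Fin d), geps C₁ C₂ ε g h x
      = C₂ - C₁ * x 0 * (1 + x 0) + ε * C₁ * (1 + 2 * x 0) * g (ε⁻¹ • x)
        - ε ^ 2 * C₁ * h (ε⁻¹ • x) := fun _ => rfl
  refine ⟨fun x => ?_, fun x hx => ?_, fun x hx => ?_⟩
  · rw [Leps_geps hg hh hLg hLh C₁ C₂ ε hεne x, hC₁def, inv_mul_cancel₀ hKne]
  · have h1 := abs_le.mp (habsg (x 0)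
      (by rcases hx with h | h <;> rw [h] <;> norm_num)
      (by rcases hx with h | h <;> rw [h] <;> norm_num) (ε⁻¹ • x))
    have h2 := abs_le.mp (habsh (ε⁻¹ • x))
    rw [hgeval]
    have hq : x 0 * (1 + x 0) = 0 := by rcases hx with h | h <;> rw [h] <;> ring
    rw [hC₂def] at *
    nlinarith [h1.1, h1.2, h2.1, h2.2]
  · have h1 := abs_le.mp (habsg (x 0) hx.1 hx.2 (ε⁻¹ • x))
    have h2 := abs_le.mp (habsh (ε⁻¹ • x))
    have hq1 : C₁ * (x 0 * (1 + x 0)) ≤ 0 :=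
      mul_nonpos_of_nonneg_of_nonpos hC₁.le
        (mul_nonpos_of_nonpos_of_nonneg hx.2 (by linarith [hx.1]))
    have hq2 : C₁ * (-1) ≤ C₁ * (x 0 * (1 + x 0)) :=
      mul_le_mul_of_nonneg_left (by nlinarith [sq_nonneg (x 0)]) hC₁.le
    rw [hgeval, abs_le]
    constructor
    · rw [hMdef, hC₂def] at *
      nlinarith [h1.1, h1.2, h2.1, h2.2]
    · rw [hMdef, hC₂def] at *
      nlinarith [h1.1, h1.2, h2.1, h2.2]


end
end

section
/- Let E be a measurable space, let P and P' be Markov kernels on E with invariant probability measures π and π' respectively (i.e. πP = π and π'P' = π'). Suppose there exist η ∈ (0,1) and ε ≥ 0 such that ‖ν_1 P − ν_2 P‖_TV ≤ η ‖ν_1 − ν_2‖_TV for all probability measures ν_1, ν_2 on E, and sup_{x ∈ E} ‖P(x, ·) − P'(x, ·)‖_TV ≤ ε. Then ‖π − π'‖_TV ≤ ε/(1 − η). -/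
/-!
Write `πP` for `π.bind P`. Since `π = πP` and `π' = π'P'`, the triangle inequality through
`π'P` gives `d(π, π') ≤ d(πP, π'P) + d(π'P, π'P') ≤ η d(π, π') + ε`, where the second term
is bounded by averaging the pointwise bound `d(P x, P' x) ≤ ε` against `π'`. As `d(π, π')`
is finite and `η < 1`, this rearranges to `d(π, π') ≤ ε / (1 - η)`.
-/

open MeasureTheory ProbabilityTheory

/-- Total variation distance between two measures:
`tvDist μ ν = sup { |μ(s) − ν(s)| : s measurable }`. (For probability measures this is
one half of the total variation norm of `μ − ν`; the statement below is invariant under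
this choice of normalisation.) -/
noncomputable def tvDist {E : Type*} [MeasurableSpace E] (μ ν : Measure E) : ENNReal :=
  ⨆ (s : Set E) (_ : MeasurableSet s), (μ s - ν s) + (ν s - μ s)

section

variable {E : Type*} [MeasurableSpace E]

lemma tvDist_le {μ ν : Measure E} {c : ENNReal}
    (h : ∀ s, MeasurableSet s → (μ s - ν s) + (ν s - μ s) ≤ c) : tvDist μ ν ≤ c :=
  iSup₂_le h

lemma le_tvDist (μ ν : Measure E) {s : Set E} (hs : MeasurableSet s) :
    (μ s - ν s) + (ν s - μ s) ≤ tvDist μ ν :=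
  le_iSup₂ (f := fun s (_ : MeasurableSet s) => (μ s - ν s) + (ν s - μ s)) s hs

lemma tvDist_triangle (μ ρ ν : Measure E) : tvDist μ ν ≤ tvDist μ ρ + tvDist ρ ν := by
  refine tvDist_le fun s hs => ?_
  calc (μ s - ν s) + (ν s - μ s)
      ≤ ((μ s - ρ s) + (ρ s - ν s)) + ((ν s - ρ s) + (ρ s - μ s)) :=
        add_le_add tsub_le_tsub_add_tsub tsub_le_tsub_add_tsub
    _ = ((μ s - ρ s) + (ρ s - μ s)) + ((ρ s - ν s) + (ν s - ρ s)) := by ring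
    _ ≤ tvDist μ ρ + tvDist ρ ν :=
        add_le_add (le_tvDist _ _ hs) (le_tvDist _ _ hs)

lemma tvDist_le_measure_univ_add (μ ν : Measure E) : tvDist μ ν ≤ μ Set.univ + ν Set.univ :=
  tvDist_le fun _ _ =>
    add_le_add (tsub_le_self.trans (measure_mono (Set.subset_univ _)))
      (tsub_le_self.trans (measure_mono (Set.subset_univ _)))

lemma tvDist_ne_top (μ ν : Measure E) [IsFiniteMeasure μ] [IsFiniteMeasure ν] : tvDist μ ν ≠ ⊤ :=
  ne_top_of_le_ne_top (by finiteness) (tvDist_le_measure_univ_add μ ν)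

lemma tvDist_bind_le_lintegral {α : Type*} [MeasurableSpace α] (μ : Measure α)
    (κ κ' : Kernel α E) :
    tvDist (μ.bind fun x => κ x) (μ.bind fun x => κ' x) ≤ ∫⁻ x, tvDist (κ x) (κ' x) ∂μ := by
  refine tvDist_le fun s hs => ?_
  have hκ : Measurable fun x => κ x s := κ.measurable_coe hs
  have hκ' : Measurable fun x => κ' x s := κ'.measurable_coe hs
  rw [Measure.bind_apply hs κ.aemeasurable, Measure.bind_apply hs κ'.aemeasurable]
  calc (∫⁻ x, κ x s ∂μ) - (∫⁻ x, κ' x s ∂μ) + ((∫⁻ x, κ' x s ∂μ) - (∫⁻ x, κ x s ∂μ))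
      ≤ (∫⁻ x, κ x s - κ' x s ∂μ) + (∫⁻ x, κ' x s - κ x s ∂μ) :=
        add_le_add (lintegral_sub_le _ _ hκ') (lintegral_sub_le _ _ hκ)
    _ = ∫⁻ x, (κ x s - κ' x s) + (κ' x s - κ x s) ∂μ :=
        (lintegral_add_left (hκ.sub hκ') _).symm
    _ ≤ ∫⁻ x, tvDist (κ x) (κ' x) ∂μ :=
        lintegral_mono fun x => le_tvDist _ _ hs

lemma tvDist_bind_le {α : Type*} [MeasurableSpace α] (μ : Measure α) [IsProbabilityMeasure μ]
    {κ κ' : Kernel α E} {ε : ENNReal} (h : ∀ x, tvDist (κ x) (κ' x) ≤ ε) :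
    tvDist (μ.bind fun x => κ x) (μ.bind fun x => κ' x) ≤ ε :=
  calc _ ≤ ∫⁻ x, tvDist (κ x) (κ' x) ∂μ := tvDist_bind_le_lintegral μ κ κ'
    _ ≤ ∫⁻ _, ε ∂μ := lintegral_mono h
    _ = ε := by simp

end

lemma ENNReal.le_div_one_sub_of_le_mul_add {t η ε : ENNReal} (ht : t ≠ ⊤) (hη : η < 1)
    (h : t ≤ η * t + ε) : t ≤ ε / (1 - η) := by
  rw [ENNReal.le_div_iff_mul_le (Or.inl (tsub_pos_of_lt hη).ne')
      (Or.inl (ENNReal.sub_ne_top ENNReal.one_ne_top)),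
    ENNReal.mul_sub (fun _ _ => ht), mul_one, mul_comm, tsub_le_iff_right, add_comm]
  exact h

theorem invariant_measure_stability_general {E : Type*} [MeasurableSpace E]
    (P P' : Kernel E E)
    (π π' : Measure E) [IsProbabilityMeasure π] [IsProbabilityMeasure π']
    (hπ : π.bind (fun x => P x) = π) (hπ' : π'.bind (fun x => P' x) = π')
    (η ε : ENNReal) (hη₁ : η < 1)
    (hcontr : ∀ ν₁ ν₂ : Measure E, IsProbabilityMeasure ν₁ → IsProbabilityMeasure ν₂ →
      tvDist (ν₁.bind fun x => P x) (ν₂.bind fun x => P x) ≤ η * tvDist ν₁ ν₂)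
    (hclose : ∀ x : E, tvDist (P x) (P' x) ≤ ε) :
    tvDist π π' ≤ ε / (1 - η) := by
  refine ENNReal.le_div_one_sub_of_le_mul_add (tvDist_ne_top π π') hη₁ ?_
  calc tvDist π π' = tvDist (π.bind fun x => P x) (π'.bind fun x => P' x) := by rw [hπ, hπ']
    _ ≤ tvDist (π.bind fun x => P x) (π'.bind fun x => P x)
        + tvDist (π'.bind fun x => P x) (π'.bind fun x => P' x) := tvDist_triangle _ _ _
    _ ≤ η * tvDist π π' + ε :=
        add_le_add (hcontr π π' inferInstance inferInstance) (tvDist_bind_le π' hclose)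

/-- If `P` satisfies a total-variation contraction with constant `η ∈ (0,1)`,
`P'` is uniformly `ε`-close to `P` in total variation, and `π`, `π'` are invariant probability
measures of `P`, `P'` respectively, then `‖π − π'‖_TV ≤ ε/(1 − η)`. -/
theorem invariant_measure_stability {E : Type*} [MeasurableSpace E]
    (P P' : Kernel E E) [IsMarkovKernel P] [IsMarkovKernel P']
    (π π' : Measure E) [IsProbabilityMeasure π] [IsProbabilityMeasure π']
    (hπ : π.bind (fun x => P x) = π) (hπ' : π'.bind (fun x => P' x) = π')
    (η ε : ENNReal) (hη₀ : 0 < η) (hη₁ : η < 1)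
    (hcontr : ∀ ν₁ ν₂ : Measure E, IsProbabilityMeasure ν₁ → IsProbabilityMeasure ν₂ →
      tvDist (ν₁.bind fun x => P x) (ν₂.bind fun x => P x) ≤ η * tvDist ν₁ ν₂)
    (hclose : ∀ x : E, tvDist (P x) (P' x) ≤ ε) :
    tvDist π π' ≤ ε / (1 - η) :=
  invariant_measure_stability_general P P' π π' hπ hπ' η ε hη₁ hcontr hclose
end
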